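/- Let G be the graph on vertices {u, v} ∪ N_u ∪ N_v where u is adjacent to v and to all vertices of N_u, v is adjacent to all vertices of N_v, N_u and N_v are disjoint, |N_u| >= 1, |N_v| >= 1, and deg(u) + deg(v) >= 5 (there may be arbitrary edges between N_u and N_v keeping G triangle-free). If u' ∈ N_u and v' ∈ N_v, then C = V(G) \ {u', v'} is an identifying code of G, of size deg(u) + deg(v) - 2 = ((deg(u)+deg(v)-2)/(deg(u)+deg(v)))·n where n = |V(G)|. -/

import Mathlib

open SimpleGraph

/-- The closed neighborhood of a vertex. -/
def cnbr {V : Type*} (G : SimpleGraph V) (v : V) : Set V := insert v (G.neighborSet v)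

/-- `C` is an identifying code of `G`: every vertex is dominated by `C` and the
closed-neighborhood traces on `C` are pairwise distinct. -/
def IsIdCode {V : Type*} (G : SimpleGraph V) (C : Set V) : Prop :=
  (∀ v, (cnbr G v ∩ C).Nonempty) ∧
  ∀ u v : V, cnbr G u ∩ C = cnbr G v ∩ C → u = v

/-- The minimum size of an identifying code of `G`. -/
noncomputable def gammaID {V : Type*} (G : SimpleGraph V) : ℕ :=
  sInf {n | ∃ C : Set V, IsIdCode G C ∧ C.ncard = n}

/-!
Write `C` for the complement of `{u', v'}`. Every vertex other than `u` and `v` is adjacent to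
`u` or to `v`, both of which lie in `C`, and `u'`, `v'` are dominated by `u`, `v`. In a
triangle-free graph two distinct vertices with the same trace on `C`, one of them in `C`, must be
adjacent and have no further neighbour in `C`; by the previous remark they would have to be `u`
and `v`, which forces `deg u, deg v ≤ 2`. The two excluded vertices are told apart by `u`, since
`u'` is adjacent to `u` and `v'` is not. Finally `N(u)` and `N(v)` partition the vertex set, so
`|V| = deg u + deg v`.
-/

namespace SimpleGraph

variable {V : Type*} {G : SimpleGraph V}

lemma mem_cnbr {a z : V} : z ∈ cnbr G a ↔ z = a ∨ G.Adj a z := by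
  simp [cnbr, mem_neighborSet]

lemma CliqueFree.not_adj_of_adj_of_adj (htf : G.CliqueFree 3) {a b c : V}
    (hab : G.Adj a b) (hac : G.Adj a c) : ¬ G.Adj b c := by
  classical
  exact fun hbc => htf {a, b, c} (is3Clique_triple_iff.mpr ⟨hab, hac, hbc⟩)

lemma CliqueFree.disjoint_neighborSet_of_adj (htf : G.CliqueFree 3) {u v : V} (huv : G.Adj u v) :
    Disjoint (G.neighborSet u) (G.neighborSet v) :=
  Set.disjoint_left.mpr fun _ hu hv => htf.not_adj_of_adj_of_adj huv hu hv

lemma cnbr_union_cnbr_of_adj {u v : V} (huv : G.Adj u v) :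
    cnbr G u ∪ cnbr G v = G.neighborSet u ∪ G.neighborSet v := by
  ext z
  simp only [Set.mem_union, mem_cnbr, mem_neighborSet]
  constructor
  · rintro ((rfl | h) | (rfl | h))
    exacts [Or.inr huv.symm, Or.inl h, Or.inl huv, Or.inr h]
  · rintro (h | h)
    exacts [Or.inl (Or.inr h), Or.inr (Or.inr h)]

lemma CliqueFree.eq_of_cnbr_inter_subset (htf : G.CliqueFree 3) {C : Set V} {a b z : V}
    (hab : G.Adj a b) (h : cnbr G a ∩ C ⊆ cnbr G b) (hz : z ∈ C) (haz : G.Adj a z) : z = b :=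
  (mem_cnbr.mp (h ⟨mem_cnbr.mpr (Or.inr haz), hz⟩)).resolve_right
    (htf.not_adj_of_adj_of_adj hab.symm · |>.elim haz)

lemma CliqueFree.adj_and_isolated_of_cnbr_inter_eq (htf : G.CliqueFree 3) {C : Set V} {a b : V}
    (hab : a ≠ b) (ha : a ∈ C) (h : cnbr G a ∩ C = cnbr G b ∩ C) :
    G.Adj a b ∧ (∀ z ∈ C, G.Adj a z → z = b) ∧ (∀ z ∈ C, G.Adj b z → z = a) := by
  have hadj : G.Adj a b := by
    have : a ∈ cnbr G b ∩ C := h ▸ ⟨mem_cnbr.mpr (Or.inl rfl), ha⟩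
    exact ((mem_cnbr.mp this.1).resolve_left hab).symm
  exact ⟨hadj, fun z hz => htf.eq_of_cnbr_inter_subset hadj (h.le.trans Set.inter_subset_left) hz,
    fun z hz => htf.eq_of_cnbr_inter_subset hadj.symm (h.ge.trans Set.inter_subset_left) hz⟩

end SimpleGraph

section TwoStars

variable {V : Type*} {G : SimpleGraph V} {u v u' v' : V}

lemma exists_adj_mem_pair (huv : G.Adj u v) (hall : (Set.univ : Set V) = cnbr G u ∪ cnbr G v)
    (w : V) : ∃ h ∈ ({u, v} : Set V), G.Adj w h := by
  have hw : w ∈ cnbr G u ∪ cnbr G v := hall ▸ Set.mem_univ w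
  simp only [Set.mem_union, mem_cnbr] at hw
  rcases hw with (rfl | h) | (rfl | h)
  exacts [⟨v, by simp, huv⟩, ⟨u, by simp, h.symm⟩, ⟨u, by simp, huv.symm⟩,
    ⟨v, by simp, h.symm⟩]

lemma mem_code_left (hu' : u' ∈ G.neighborSet u \ {v}) (hv' : v' ∈ G.neighborSet v \ {u}) :
    u ∈ (Set.univ : Set V) \ {u', v'} := by
  have : u ≠ v' := fun h => hv'.2 h.symm
  simp [hu'.1.ne, this]

lemma mem_code_right (hu' : u' ∈ G.neighborSet u \ {v}) (hv' : v' ∈ G.neighborSet v \ {u}) :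
    v ∈ (Set.univ : Set V) \ {u', v'} :=
  Set.pair_comm v' u' ▸ mem_code_left hv' hu'

lemma not_adj_right_excluded (htf : G.CliqueFree 3) (huv : G.Adj u v)
    (hv' : v' ∈ G.neighborSet v \ {u}) : ¬ G.Adj u v' := fun h =>
  htf.not_adj_of_adj_of_adj huv.symm hv'.1 h

lemma pair_subset_code (hu' : u' ∈ G.neighborSet u \ {v}) (hv' : v' ∈ G.neighborSet v \ {u}) :
    ({u, v} : Set V) ⊆ (Set.univ : Set V) \ {u', v'} :=
  Set.insert_subset (mem_code_left hu' hv') (Set.singleton_subset_iff.mpr (mem_code_right hu' hv'))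

lemma cnbr_inter_code_nonempty (hu' : u' ∈ G.neighborSet u \ {v})
    (hv' : v' ∈ G.neighborSet v \ {u}) (w : V) :
    (cnbr G w ∩ ((Set.univ : Set V) \ {u', v'})).Nonempty := by
  by_cases hw : w = u' ∨ w = v'
  · rcases hw with rfl | rfl
    · exact ⟨u, mem_cnbr.mpr (Or.inr hu'.1.symm), mem_code_left hu' hv'⟩
    · exact ⟨v, mem_cnbr.mpr (Or.inr hv'.1.symm), mem_code_right hu' hv'⟩
  · exact ⟨w, mem_cnbr.mpr (Or.inl rfl), by simpa using hw⟩

lemma cnbr_inter_code_ne (htf : G.CliqueFree 3) (huv : G.Adj u v)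
    (hu' : u' ∈ G.neighborSet u \ {v}) (hv' : v' ∈ G.neighborSet v \ {u}) :
    cnbr G u' ∩ ((Set.univ : Set V) \ {u', v'}) ≠
      cnbr G v' ∩ ((Set.univ : Set V) \ {u', v'}) := by
  intro h
  have hu : u ∈ cnbr G u' ∩ ((Set.univ : Set V) \ {u', v'}) :=
    ⟨mem_cnbr.mpr (Or.inr hu'.1.symm), mem_code_left hu' hv'⟩
  rcases mem_cnbr.mp (h ▸ hu).1 with h' | h'
  exacts [hv'.2 h'.symm, not_adj_right_excluded htf huv hv' h'.symm]

lemma neighborSet_subset_of_isolated (htf : G.CliqueFree 3) (huv : G.Adj u v)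
    (hv' : v' ∈ G.neighborSet v \ {u})
    (hiso : ∀ z ∈ (Set.univ : Set V) \ {u', v'}, G.Adj u z → z = v) :
    G.neighborSet u ⊆ {v, u'} := by
  intro z hz
  by_cases hzC : z = u' ∨ z = v'
  · rcases hzC with rfl | rfl
    · simp
    · exact absurd hz (not_adj_right_excluded htf huv hv')
  · exact Or.inl (hiso z (by simpa using hzC) hz)

lemma ncard_neighborSet_le_two_of_isolated (htf : G.CliqueFree 3) (huv : G.Adj u v)
    (hv' : v' ∈ G.neighborSet v \ {u})
    (hiso : ∀ z ∈ (Set.univ : Set V) \ {u', v'}, G.Adj u z → z = v) :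
    (G.neighborSet u).ncard ≤ 2 :=
  calc (G.neighborSet u).ncard
      ≤ ({v, u'} : Set V).ncard :=
        Set.ncard_le_ncard (neighborSet_subset_of_isolated htf huv hv' hiso)
    _ ≤ 2 := (Set.ncard_insert_le v {u'}).trans (by rw [Set.ncard_singleton])

lemma ncard_neighborSet_add_le_of_isolated (htf : G.CliqueFree 3) (huv : G.Adj u v)
    (hu' : u' ∈ G.neighborSet u \ {v}) (hv' : v' ∈ G.neighborSet v \ {u})
    (hu : ∀ z ∈ (Set.univ : Set V) \ {u', v'}, G.Adj u z → z = v)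
    (hv : ∀ z ∈ (Set.univ : Set V) \ {u', v'}, G.Adj v z → z = u) :
    (G.neighborSet u).ncard + (G.neighborSet v).ncard ≤ 4 := by
  rw [Set.pair_comm] at hv
  have := ncard_neighborSet_le_two_of_isolated htf huv hv' hu
  have := ncard_neighborSet_le_two_of_isolated htf huv.symm hu' hv
  omega

lemma eq_of_cnbr_inter_code_eq (htf : G.CliqueFree 3) (huv : G.Adj u v)
    (hall : (Set.univ : Set V) = cnbr G u ∪ cnbr G v)
    (hdeg : 5 ≤ (G.neighborSet u).ncard + (G.neighborSet v).ncard)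
    (hu' : u' ∈ G.neighborSet u \ {v}) (hv' : v' ∈ G.neighborSet v \ {u}) {a b : V}
    (h : cnbr G a ∩ ((Set.univ : Set V) \ {u', v'}) =
      cnbr G b ∩ ((Set.univ : Set V) \ {u', v'})) :
    a = b := by
  set C := (Set.univ : Set V) \ {u', v'}
  by_contra hab
  by_cases hC : a ∈ C ∨ b ∈ C
  · wlog ha : a ∈ C generalizing a b
    · exact this h.symm (Ne.symm hab) hC.symm (hC.resolve_left ha)
    obtain ⟨-, ha', hb'⟩ := htf.adj_and_isolated_of_cnbr_inter_eq hab ha h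
    -- `a` and `b` each have a neighbour in `{u, v} ⊆ C`, which can only be the other one
    obtain ⟨x, hx, hax⟩ := exists_adj_mem_pair huv hall a
    obtain ⟨y, hy, hby⟩ := exists_adj_mem_pair huv hall b
    have hb : b ∈ ({u, v} : Set V) := ha' x (pair_subset_code hu' hv' hx) hax ▸ hx
    have ha : a ∈ ({u, v} : Set V) := hb' y (pair_subset_code hu' hv' hy) hby ▸ hy
    have huv4 : (G.neighborSet u).ncard + (G.neighborSet v).ncard ≤ 4 := by
      simp only [Set.mem_insert_iff, Set.mem_singleton_iff] at ha hb
      rcases ha with rfl | rfl <;> rcases hb with rfl | rfl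
      exacts [absurd rfl hab, ncard_neighborSet_add_le_of_isolated htf huv hu' hv' ha' hb',
        ncard_neighborSet_add_le_of_isolated htf huv hu' hv' hb' ha', absurd rfl hab]
    omega
  · have ha : a = u' ∨ a = v' := by simpa [C, or_iff_not_imp_left] using (not_or.mp hC).1
    have hb : b = u' ∨ b = v' := by simpa [C, or_iff_not_imp_left] using (not_or.mp hC).2
    rcases ha with rfl | rfl <;> rcases hb with rfl | rfl
    exacts [hab rfl, cnbr_inter_code_ne htf huv hu' hv' h,
      cnbr_inter_code_ne htf huv hu' hv' h.symm, hab rfl]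

lemma ncard_univ_eq_of_adj [Finite V] (htf : G.CliqueFree 3) (huv : G.Adj u v)
    (hall : (Set.univ : Set V) = cnbr G u ∪ cnbr G v) :
    (Set.univ : Set V).ncard = (G.neighborSet u).ncard + (G.neighborSet v).ncard := by
  rw [hall, cnbr_union_cnbr_of_adj huv,
    Set.ncard_union_eq (htf.disjoint_neighborSet_of_adj huv)]

end TwoStars

theorem stmt_17_general {V : Type*} [Fintype V] (G : SimpleGraph V) (u v : V)
    (huv : G.Adj u v) (htf : G.CliqueFree 3)
    (hall : (Set.univ : Set V) = cnbr G u ∪ cnbr G v)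
    (hdeg : 5 ≤ (G.neighborSet u).ncard + (G.neighborSet v).ncard)
    (u' v' : V) (hu' : u' ∈ G.neighborSet u \ {v}) (hv' : v' ∈ G.neighborSet v \ {u}) :
    IsIdCode G ((Set.univ : Set V) \ {u', v'}) ∧
    ((Set.univ : Set V) \ {u', v'}).ncard =
      (G.neighborSet u).ncard + (G.neighborSet v).ncard - 2 := by
  refine ⟨⟨cnbr_inter_code_nonempty hu' hv',
    fun a b h => eq_of_cnbr_inter_code_eq htf huv hall hdeg hu' hv' h⟩, ?_⟩
  have hu'v' : u' ≠ v' := fun h => not_adj_right_excluded htf huv hv' (h ▸ hu'.1)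
  rw [Set.ncard_sdiff (Set.subset_univ _), Set.ncard_pair hu'v',
    ncard_univ_eq_of_adj htf huv hall]

theorem stmt_17 {V : Type*} [Fintype V] (G : SimpleGraph V) (u v : V)
    (huv : G.Adj u v) (htf : G.CliqueFree 3)
    (hall : (Set.univ : Set V) = cnbr G u ∪ cnbr G v)
    (hNu : (G.neighborSet u \ {v}).Nonempty)
    (hNv : (G.neighborSet v \ {u}).Nonempty)
    (hdeg : 5 ≤ (G.neighborSet u).ncard + (G.neighborSet v).ncard)
    (u' v' : V) (hu' : u' ∈ G.neighborSet u \ {v}) (hv' : v' ∈ G.neighborSet v \ {u}) :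
    IsIdCode G ((Set.univ : Set V) \ {u', v'}) ∧
    ((Set.univ : Set V) \ {u', v'}).ncard =
      (G.neighborSet u).ncard + (G.neighborSet v).ncard - 2 :=
  stmt_17_general G u v huv htf hall hdeg u' v' hu' hv'
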